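/- Let V and W be dense, countable, integer-distance-free subsets of c (the space of convergent real sequences with the sup norm). If G and H are geometrically existentially closed geometric 1-graphs with vertex sets V and W respectively, then G and H are isomorphic as graphs. -/
import Mathlib


open Filter Topology Set

/-- The sup-norm distance between two real sequences. -/
noncomputable def supDist (x y : ℕ → ℝ) : ℝ := ⨆ n, |x n - y n|

/-- Membership in the space `c` of convergent real sequences. -/
def InC (x : ℕ → ℝ) : Prop := ∃ l : ℝ, Tendsto x atTop (nhds l)

/-- A subset of `c` is integer-distance-free. -/
def IDFSet (A : Set (ℕ → ℝ)) : Prop :=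
  (∀ x ∈ A, ∀ n, ∀ k : ℤ, x n ≠ (k : ℝ)) ∧
  (∀ x ∈ A, ∀ l : ℝ, Tendsto x atTop (nhds l) → ∀ k : ℤ, l ≠ (k : ℝ)) ∧
  (∀ x ∈ A, ∀ y ∈ A, x ≠ y → ∀ n, ∀ k : ℤ, x n - y n ≠ (k : ℝ)) ∧
  (∀ x ∈ A, ∀ y ∈ A, x ≠ y → ∀ lx ly : ℝ, Tendsto x atTop (nhds lx) →
    Tendsto y atTop (nhds ly) → ∀ k : ℤ, lx - ly ≠ (k : ℝ))

noncomputable def limv (x : ℕ → ℝ) : ℝ := limUnder atTop x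

lemma limv_spec {x : ℕ → ℝ} (h : InC x) : Tendsto x atTop (𝓝 (limv x)) := by
  obtain ⟨l, hl⟩ := h
  rwa [limv, hl.limUnder_eq]

noncomputable def ev (x : ℕ → ℝ) : Option ℕ → ℝ
  | some n => x n
  | none => limv x

lemma bdd_abs_sub {u v : ℕ → ℝ} (hu : InC u) (hv : InC v) :
    BddAbove (Set.range fun n => |u n - v n|) :=
  (((limv_spec hu).sub (limv_spec hv)).abs).bddAbove_range

lemma le_supDist {u v : ℕ → ℝ} (hu : InC u) (hv : InC v) (n : ℕ) :
    |u n - v n| ≤ supDist u v :=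
  le_ciSup (bdd_abs_sub hu hv) n

lemma supDist_le {u v : ℕ → ℝ} {c : ℝ} (h : ∀ n, |u n - v n| ≤ c) (hc : 0 ≤ c) :
    supDist u v ≤ c :=
  Real.iSup_le h hc

lemma abs_limv_le {u v : ℕ → ℝ} (hu : InC u) (hv : InC v) :
    |limv u - limv v| ≤ supDist u v :=
  le_of_tendsto (((limv_spec hu).sub (limv_spec hv)).abs)
    (Filter.Eventually.of_forall (le_supDist hu hv))

lemma ev_le_supDist {u v : ℕ → ℝ} (hu : InC u) (hv : InC v) (t : Option ℕ) :
    |ev u t - ev v t| ≤ supDist u v := by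
  cases t with
  | none => exact abs_limv_le hu hv
  | some n => exact le_supDist hu hv n

lemma idf_nonint {A : Set (ℕ → ℝ)} (hA : IDFSet A) (hsub : ∀ x ∈ A, InC x)
    {a b : ℕ → ℝ} (ha : a ∈ A) (hb : b ∈ A) (hab : a ≠ b) (t : Option ℕ) (k : ℤ) :
    ev a t - ev b t ≠ (k : ℝ) := by
  cases t with
  | none => exact hA.2.2.2 a ha b hb hab _ _ (limv_spec (hsub a ha)) (limv_spec (hsub b hb)) k
  | some n => exact hA.2.2.1 a ha b hb hab n k

lemma floor_eq_of_mem {r x : ℝ} (hni : ∀ k : ℤ, r ≠ (k : ℝ))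
    (h1 : (⌊r⌋ : ℝ) < x) (h2 : x < ⌊r⌋ + 1) : ⌊x⌋ = ⌊r⌋ := by
  rw [Int.floor_eq_iff]
  exact ⟨le_of_lt h1, by exact_mod_cast h2⟩

lemma lt_of_nonint {r : ℝ} (hni : ∀ k : ℤ, r ≠ (k : ℝ)) : (⌊r⌋ : ℝ) < r :=
  lt_of_le_of_ne (Int.floor_le r) (fun h => hni ⌊r⌋ h.symm)

lemma floor_eventually_eq {d : ℕ → ℝ} {l : ℝ} (hd : Tendsto d atTop (𝓝 l))
    (hni : ∀ k : ℤ, l ≠ (k : ℝ)) : ∀ᶠ n in atTop, ⌊d n⌋ = ⌊l⌋ := by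
  have h1 : (⌊l⌋ : ℝ) < l := lt_of_nonint hni
  have h2 : l < ⌊l⌋ + 1 := Int.lt_floor_add_one l
  have : ∀ᶠ n in atTop, d n ∈ Set.Ioo ((⌊l⌋ : ℝ)) ((⌊l⌋ : ℝ) + 1) :=
    hd (Ioo_mem_nhds h1 h2)
  filter_upwards [this] with n hn
  rw [Int.floor_eq_iff]
  exact ⟨le_of_lt hn.1, hn.2⟩

lemma tendsto_finset_sup' {ι : Type*} {s : Finset ι} (hs : s.Nonempty) (f : ι → ℕ → ℝ) (l : ι → ℝ)
    (h : ∀ i ∈ s, Tendsto (fun n => f i n) atTop (𝓝 (l i))) :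
    Tendsto (fun n => s.sup' hs (fun i => f i n)) atTop (𝓝 (s.sup' hs l)) := by
  induction hs using Finset.Nonempty.cons_induction with
  | singleton a => simpa using h a (by simp)
  | cons a t ha ht ih =>
      have h1 := h a (by simp)
      have h2 := ih (fun i hi => h i (Finset.mem_cons_of_mem hi))
      have h3 := h1.max h2
      have e1 : ∀ n, (Finset.cons a t ha).sup' (Finset.cons_nonempty ha) (fun i => f i n)
          = max (f a n) (t.sup' ht (fun i => f i n)) := by
        intro n; rw [Finset.sup'_cons]
      have e2 : (Finset.cons a t ha).sup' (Finset.cons_nonempty ha) l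
          = max (l a) (t.sup' ht l) := by rw [Finset.sup'_cons]
      rw [e2]
      exact h3.congr (fun n => (e1 n).symm)

lemma tendsto_finset_inf' {ι : Type*} {s : Finset ι} (hs : s.Nonempty) (f : ι → ℕ → ℝ) (l : ι → ℝ)
    (h : ∀ i ∈ s, Tendsto (fun n => f i n) atTop (𝓝 (l i))) :
    Tendsto (fun n => s.inf' hs (fun i => f i n)) atTop (𝓝 (s.inf' hs l)) := by
  induction hs using Finset.Nonempty.cons_induction with
  | singleton a => simpa using h a (by simp)
  | cons a t ha ht ih =>
      have h1 := h a (by simp)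
      have h2 := ih (fun i hi => h i (Finset.mem_cons_of_mem hi))
      have h3 := h1.min h2
      have e1 : ∀ n, (Finset.cons a t ha).inf' (Finset.cons_nonempty ha) (fun i => f i n)
          = min (f a n) (t.inf' ht (fun i => f i n)) := by
        intro n; rw [Finset.inf'_cons]
      have e2 : (Finset.cons a t ha).inf' (Finset.cons_nonempty ha) l
          = min (l a) (t.inf' ht l) := by rw [Finset.inf'_cons]
      rw [e2]
      exact h3.congr (fun n => (e1 n).symm)

lemma key_ineq {X S1 S2 Y1 Y2 : ℝ} (hfl : ⌊S1 - S2⌋ = ⌊Y1 - Y2⌋) :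
    (Y1 + (⌊X - S1⌋ : ℤ)) - (Y2 + (⌊X - S2⌋ : ℤ)) < 1 := by
  have h1 : Y1 - Y2 < ⌊Y1 - Y2⌋ + 1 := Int.lt_floor_add_one _
  have h2 : (⌊S1 - S2⌋ : ℤ) + ⌊X - S1⌋ ≤ ⌊X - S2⌋ := by
    rw [Int.le_floor]
    push_cast
    have a1 := Int.floor_le (S1 - S2)
    have a2 := Int.floor_le (X - S1)
    linarith
  rw [hfl] at h2
  have h2' : ((⌊Y1 - Y2⌋ : ℝ) + (⌊X - S1⌋ : ℤ)) ≤ ((⌊X - S2⌋ : ℤ) : ℝ) := by exact_mod_cast h2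
  push_cast at h1 ⊢
  linarith

lemma floor_eq_of_bounds {v : ℝ} {c : ℤ} (h1 : (c : ℝ) ≤ v) (h2 : v < c + 1) : ⌊v⌋ = c :=
  Int.floor_eq_iff.mpr ⟨h1, by exact_mod_cast h2⟩

lemma floor_neg_of_nonint {u : ℝ} {c : ℤ} (hc : ⌊u⌋ = c) (hni : ∀ k : ℤ, u ≠ (k : ℝ)) :
    ⌊-u⌋ = -c - 1 := by
  have h1 : (c : ℝ) < u := by
    have := Int.floor_le u
    rw [hc] at this
    exact lt_of_le_of_ne this (fun h => hni c h.symm)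
  have h2 : u < c + 1 := by
    have := Int.lt_floor_add_one u
    rw [hc] at this
    exact_mod_cast this
  apply floor_eq_of_bounds <;> push_cast <;> linarith

/-- A graph on points of `c` has threshold 1: edges only between points at sup-distance
less than 1. -/
def Threshold1 {V : Set (ℕ → ℝ)} (G : SimpleGraph V) : Prop :=
  ∀ u v : V, G.Adj u v → supDist u v < 1

/-- Geometric existential closure at level 1. -/
def GEC {V : Set (ℕ → ℝ)} (G : SimpleGraph V) : Prop :=
  ∀ δ' : ℝ, 0 < δ' → δ' < 1 → ∀ x : V, ∀ A B : Finset V, Disjoint A B →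
    (∀ w : V, w ∈ A ∨ w ∈ B → supDist x w < 1) →
    ∃ z : V, z ∉ A ∧ z ∉ B ∧ z ≠ x ∧
      (∀ a ∈ A, G.Adj z a) ∧ (∀ b ∈ B, ¬ G.Adj z b) ∧
      ((∀ w : V, w ∈ A ∨ w ∈ B → supDist z w < 1)) ∧ supDist x z < δ'

def GoodPairs {V W : Set (ℕ → ℝ)} (G : SimpleGraph V) (H : SimpleGraph W)
    (P : Finset (V × W)) : Prop :=
  (∀ p ∈ P, ∀ q ∈ P, (p.1 = q.1 ↔ p.2 = q.2)) ∧
  (∀ p ∈ P, ∀ q ∈ P, ∀ t : Option ℕ,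
    ⌊ev (p.1 : ℕ → ℝ) t - ev (q.1 : ℕ → ℝ) t⌋ = ⌊ev (p.2 : ℕ → ℝ) t - ev (q.2 : ℕ → ℝ) t⌋) ∧
  (∀ p ∈ P, ∀ q ∈ P, (G.Adj p.1 q.1 ↔ H.Adj p.2 q.2))

noncomputable def aP {V W : Set (ℕ → ℝ)} (x : ℕ → ℝ) (p : V × W) (t : Option ℕ) : ℝ :=
  ev (p.2 : ℕ → ℝ) t + (⌊ev x t - ev (p.1 : ℕ → ℝ) t⌋ : ℤ)

attribute [local instance] Classical.propDecidable

lemma ext_lemma {V W : Set (ℕ → ℝ)}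
    (hVsub : ∀ x ∈ V, InC x) (hWsub : ∀ x ∈ W, InC x)
    (hWdense : ∀ x : ℕ → ℝ, InC x → ∀ ε : ℝ, 0 < ε → ∃ w ∈ W, supDist x w < ε)
    (hVidf : IDFSet V)
    (G : SimpleGraph V) (H : SimpleGraph W)
    (hGt : Threshold1 G) (hHt : Threshold1 H) (hHgec : GEC H)
    (P : Finset (V × W)) (hP : GoodPairs G H P)
    (x : V) (hx : ∀ p ∈ P, p.1 ≠ x) :
    ∃ z : W, GoodPairs G H (insert (x, z) P) := by
  classical
  have hxC : InC (x : ℕ → ℝ) := hVsub _ x.2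
  rcases P.eq_empty_or_nonempty with rfl | hPne
  · obtain ⟨w, hwW, -⟩ := hWdense x hxC 1 one_pos
    refine ⟨⟨w, hwW⟩, ?_, ?_, ?_⟩
    · intro p hp q hq
      simp only [Finset.mem_insert, Finset.notMem_empty, or_false] at hp hq
      subst hp; subst hq
      simp
    · intro p hp q hq
      simp only [Finset.mem_insert, Finset.notMem_empty, or_false] at hp hq
      subst hp; subst hq
      simp
    · intro p hp q hq
      simp only [Finset.mem_insert, Finset.notMem_empty, or_false] at hp hq
      subst hp; subst hq
      simp
  · -- main case
    have hsC : ∀ p ∈ P, InC (p.1 : ℕ → ℝ) := fun p hp => hVsub _ p.1.2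
    have hyC : ∀ p ∈ P, InC (p.2 : ℕ → ℝ) := fun p hp => hWsub _ p.2.2
    have hxs_ne : ∀ p ∈ P, (x : ℕ → ℝ) ≠ (p.1 : ℕ → ℝ) := by
      intro p hp h
      exact hx p hp (Subtype.ext h.symm)
    have hnonint : ∀ p ∈ P, ∀ t : Option ℕ, ∀ k : ℤ,
        ev (x : ℕ → ℝ) t - ev (p.1 : ℕ → ℝ) t ≠ (k : ℝ) := by
      intro p hp t k
      exact idf_nonint hVidf hVsub x.2 p.1.2 (hxs_ne p hp) t k
    -- the per-pair floor function
    set c : V × W → Option ℕ → ℤ := fun p t => ⌊ev (x : ℕ → ℝ) t - ev (p.1 : ℕ → ℝ) t⌋ with hc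
    have haP : ∀ (p : V × W) (t : Option ℕ),
        aP (x : ℕ → ℝ) p t = ev (p.2 : ℕ → ℝ) t + (c p t : ℝ) := fun p t => rfl
    -- bounds on differences of aP
    have hdiff : ∀ t : Option ℕ, ∀ p ∈ P, ∀ q ∈ P,
        aP (x : ℕ → ℝ) p t - aP (x : ℕ → ℝ) q t < 1 := by
      intro t p hp q hq
      have hfl := hP.2.1 p hp q hq t
      exact key_ineq hfl
    set Amax : Option ℕ → ℝ := fun t => P.sup' hPne (fun p => aP (x : ℕ → ℝ) p t) with hAmax
    set Amin : Option ℕ → ℝ := fun t => P.inf' hPne (fun p => aP (x : ℕ → ℝ) p t) with hAmin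
    have gap_pos : ∀ t, 0 < Amin t + 1 - Amax t := by
      intro t
      obtain ⟨p, hp, hpe⟩ := P.exists_mem_eq_sup' hPne (fun p => aP (x : ℕ → ℝ) p t)
      obtain ⟨q, hq, hqe⟩ := P.exists_mem_eq_inf' hPne (fun p => aP (x : ℕ → ℝ) p t)
      have := hdiff t p hp q hq
      simp only [hAmax, hAmin]
      rw [hpe, hqe]
      linarith
    have gap_le : ∀ t, Amin t + 1 - Amax t ≤ 1 := by
      intro t
      obtain ⟨p, hp⟩ := hPne
      have h1 : Amin t ≤ aP (x : ℕ → ℝ) p t := by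
        simp only [hAmin]; exact Finset.inf'_le (fun p => aP (x : ℕ → ℝ) p t) hp
      have h2 : aP (x : ℕ → ℝ) p t ≤ Amax t := by
        simp only [hAmax]; exact Finset.le_sup' (fun p => aP (x : ℕ → ℝ) p t) hp
      linarith
    -- convergence of each aP
    have haT : ∀ p ∈ P, Tendsto (fun n => aP (x : ℕ → ℝ) p (some n)) atTop
        (𝓝 (aP (x : ℕ → ℝ) p none)) := by
      intro p hp
      have t1 : Tendsto (fun n => (p.2 : ℕ → ℝ) n) atTop (𝓝 (limv (p.2 : ℕ → ℝ))) :=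
        limv_spec (hyC p hp)
      have hd : Tendsto (fun n => (x : ℕ → ℝ) n - (p.1 : ℕ → ℝ) n) atTop
          (𝓝 (limv (x : ℕ → ℝ) - limv (p.1 : ℕ → ℝ))) :=
        (limv_spec hxC).sub (limv_spec (hsC p hp))
      have hfc : ∀ᶠ n in atTop, ⌊(x : ℕ → ℝ) n - (p.1 : ℕ → ℝ) n⌋
          = ⌊limv (x : ℕ → ℝ) - limv (p.1 : ℕ → ℝ)⌋ :=
        floor_eventually_eq hd (hnonint p hp none)
      have base : Tendsto (fun n => (p.2 : ℕ → ℝ) n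
          + ((⌊limv (x : ℕ → ℝ) - limv (p.1 : ℕ → ℝ)⌋ : ℤ) : ℝ)) atTop
          (𝓝 (limv (p.2 : ℕ → ℝ) + ((⌊limv (x : ℕ → ℝ) - limv (p.1 : ℕ → ℝ)⌋ : ℤ) : ℝ))) :=
        t1.add tendsto_const_nhds
      refine base.congr' ?_
      filter_upwards [hfc] with n hn
      simp only [aP, ev, hn]
    have hAT : Tendsto (fun n => Amax (some n)) atTop (𝓝 (Amax none)) :=
      tendsto_finset_sup' hPne _ _ haT
    have hAiT : Tendsto (fun n => Amin (some n)) atTop (𝓝 (Amin none)) :=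
      tendsto_finset_inf' hPne _ _ haT
    have hgT : Tendsto (fun n => Amin (some n) + 1 - Amax (some n)) atTop
        (𝓝 (Amin none + 1 - Amax none)) :=
      (hAiT.add tendsto_const_nhds).sub hAT
    have hhalf : (Amin none + 1 - Amax none) / 2 < Amin none + 1 - Amax none :=
      half_lt_self (gap_pos none)
    have hev : ∀ᶠ n in atTop,
        (Amin none + 1 - Amax none) / 2 < Amin (some n) + 1 - Amax (some n) :=
      hgT (lt_mem_nhds hhalf)
    obtain ⟨N, hN⟩ := eventually_atTop.mp hev
    obtain ⟨γ, hγpos, hγ_le_half, hγgap⟩ : ∃ γ : ℝ, 0 < γ ∧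
        γ ≤ (Amin none + 1 - Amax none) / 2 ∧ ∀ t, γ ≤ Amin t + 1 - Amax t := by
      set F : Finset ℝ := insert ((Amin none + 1 - Amax none) / 2)
        ((Finset.range N).image (fun n => Amin (some n) + 1 - Amax (some n))) with hF
      have hFne : F.Nonempty := ⟨_, Finset.mem_insert_self _ _⟩
      refine ⟨F.min' hFne, ?_, ?_, ?_⟩
      · have hall : ∀ r ∈ F, 0 < r := by
          intro r hr
          simp only [hF, Finset.mem_insert, Finset.mem_image, Finset.mem_range] at hr
          rcases hr with rfl | ⟨n, -, rfl⟩
          · linarith [gap_pos none]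
          · exact gap_pos (some n)
        exact hall _ (F.min'_mem hFne)
      · exact Finset.min'_le _ _ (Finset.mem_insert_self _ _)
      · intro t
        have hmin : ∀ r ∈ F, F.min' hFne ≤ r := fun r hr => Finset.min'_le _ _ hr
        cases t with
        | none =>
          have h1 := hmin _ (Finset.mem_insert_self _ _)
          linarith [gap_pos none]
        | some n =>
          rcases lt_or_ge n N with h | h
          · exact hmin _
              (Finset.mem_insert_of_mem (Finset.mem_image_of_mem _ (Finset.mem_range.mpr h)))
          · exact le_trans (hmin _ (Finset.mem_insert_self _ _)) (le_of_lt (hN n h))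
    have hγ_le_one : γ ≤ 1/2 := by have := gap_le none; linarith
    set pt : ℕ → ℝ := fun n => Amax (some n) + γ/2 with hpt
    have hptT : Tendsto pt atTop (𝓝 (Amax none + γ/2)) := hAT.add tendsto_const_nhds
    have hptC : InC pt := ⟨_, hptT⟩
    have hptev : ∀ t, ev pt t = Amax t + γ/2 := by
      intro t; cases t with
      | none =>
        show limv pt = _
        rw [limv]
        exact hptT.limUnder_eq
      | some n => rfl
    have hptb : ∀ t, ∀ p ∈ P, (c p t : ℝ) + γ/2 ≤ ev pt t - ev (p.2 : ℕ → ℝ) t ∧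
        ev pt t - ev (p.2 : ℕ → ℝ) t ≤ (c p t : ℝ) + 1 - γ/2 := by
      intro t p hp
      have h1 : Amin t ≤ aP (x : ℕ → ℝ) p t := by
        simp only [hAmin]; exact Finset.inf'_le (fun p => aP (x : ℕ → ℝ) p t) hp
      have h2 : aP (x : ℕ → ℝ) p t ≤ Amax t := by
        simp only [hAmax]; exact Finset.le_sup' (fun p => aP (x : ℕ → ℝ) p t) hp
      have hgapt : γ ≤ Amin t + 1 - Amax t := hγgap t
      have haPe := haP p t
      rw [hptev t]
      constructor
      · linarith
      · linarith
    obtain ⟨w, hwW, hwd⟩ := hWdense pt hptC (γ/8) (by positivity)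
    have hwC : InC w := hWsub w hwW
    have hwev : ∀ t, |ev pt t - ev w t| < γ/8 :=
      fun t => lt_of_le_of_lt (ev_le_supDist hptC hwC t) hwd
    have hwb : ∀ t, ∀ p ∈ P, (c p t : ℝ) + 3*γ/8 ≤ ev w t - ev (p.2 : ℕ → ℝ) t ∧
        ev w t - ev (p.2 : ℕ → ℝ) t ≤ (c p t : ℝ) + 1 - 3*γ/8 := by
      intro t p hp
      have h := hptb t p hp
      have h2 := abs_lt.mp (hwev t)
      constructor <;> linarith [h.1, h.2, h2.1, h2.2]
    set Near : Finset (V × W) := P.filter (fun p => ∀ t, c p t = 0 ∨ c p t = -1) with hNear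
    set Af : Finset W := (Near.filter (fun p => G.Adj x p.1)).image Prod.snd with hAf
    set Bf : Finset W := (Near.filter (fun p => ¬ G.Adj x p.1)).image Prod.snd with hBf
    have hdisjAB : Disjoint Af Bf := by
      rw [Finset.disjoint_left]
      intro y hyA hyB
      simp only [hAf, hBf, Finset.mem_image, Finset.mem_filter, hNear] at hyA hyB
      obtain ⟨p, ⟨⟨hpP, -⟩, hpadj⟩, hpy⟩ := hyA
      obtain ⟨q, ⟨⟨hqP, -⟩, hqadj⟩, hqy⟩ := hyB
      have h2 : p.2 = q.2 := by rw [hpy, hqy]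
      have h1 : p.1 = q.1 := (hP.1 p hpP q hqP).mpr h2
      have : p = q := Prod.ext h1 h2
      rw [this] at hpadj
      exact hqadj hpadj
    have hball : ∀ v : W, v ∈ Af ∨ v ∈ Bf → supDist w (v : ℕ → ℝ) < 1 := by
      intro v hv
      have hvNear : ∃ p ∈ Near, p.2 = v := by
        rcases hv with hv | hv
        · simp only [hAf, Finset.mem_image, Finset.mem_filter] at hv
          obtain ⟨p, ⟨hpN, -⟩, hpv⟩ := hv
          exact ⟨p, hpN, hpv⟩
        · simp only [hBf, Finset.mem_image, Finset.mem_filter] at hv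
          obtain ⟨p, ⟨hpN, -⟩, hpv⟩ := hv
          exact ⟨p, hpN, hpv⟩
      obtain ⟨p, hpN, rfl⟩ := hvNear
      have hpN' := hpN
      simp only [hNear, Finset.mem_filter] at hpN'
      obtain ⟨hpP, hpc⟩ := hpN'
      have hbound : ∀ t, |ev w t - ev (p.2 : ℕ → ℝ) t| ≤ 1 - 3*γ/8 := by
        intro t
        have h := hwb t p hpP
        rw [abs_le]
        rcases hpc t with h0 | h0 <;> rw [h0] at h <;> push_cast at h <;>
          exact ⟨by linarith [h.1, h.2, hγ_le_one], by linarith [h.1, h.2, hγ_le_one]⟩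
      have hsd : supDist w (p.2 : ℕ → ℝ) ≤ 1 - 3*γ/8 :=
        supDist_le (fun n => hbound (some n)) (by linarith [hγ_le_one, hγpos])
      linarith [hγpos]
    obtain ⟨z, hzA, hzB, hzwne, hadjA, hnadjB, hzball, hzd⟩ :=
      hHgec (γ/8) (by positivity) (by linarith [hγ_le_one, hγpos]) ⟨w, hwW⟩ Af Bf hdisjAB hball
    have hzC : InC (z : ℕ → ℝ) := hWsub _ z.2
    have hzev : ∀ t, |ev w t - ev (z : ℕ → ℝ) t| < γ/8 :=
      fun t => lt_of_le_of_lt (ev_le_supDist hwC hzC t) hzd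
    have hzb : ∀ t, ∀ p ∈ P, (c p t : ℝ) + γ/4 ≤ ev (z : ℕ → ℝ) t - ev (p.2 : ℕ → ℝ) t ∧
        ev (z : ℕ → ℝ) t - ev (p.2 : ℕ → ℝ) t ≤ (c p t : ℝ) + 1 - γ/4 := by
      intro t p hp
      have h := hwb t p hp
      have h2 := abs_lt.mp (hzev t)
      constructor <;> linarith [h.1, h.2, h2.1, h2.2]
    have hfloorz : ∀ p ∈ P, ∀ t, ⌊ev (z : ℕ → ℝ) t - ev (p.2 : ℕ → ℝ) t⌋ = c p t := by
      intro p hp t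
      have h := hzb t p hp
      exact floor_eq_of_bounds (by linarith [h.1, hγpos]) (by push_cast; linarith [h.2, hγpos])
    have hzney : ∀ p ∈ P, (z : W) ≠ p.2 := by
      intro p hp h
      have hb := hzb none p hp
      have h0 : ev (z : ℕ → ℝ) none - ev (p.2 : ℕ → ℝ) none = 0 := by rw [h]; ring
      rw [h0] at hb
      have h1 : (c p none : ℝ) < 0 := by linarith [hb.1, hγpos]
      have h2 : (-1 : ℝ) < (c p none : ℝ) := by linarith [hb.2, hγpos]
      have h1' : c p none < 0 := by exact_mod_cast h1
      have h2' : (-1 : ℤ) < c p none := by exact_mod_cast h2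
      omega
    have hGfar : ∀ p ∈ P, p ∉ Near → ¬ G.Adj x p.1 ∧ ¬ H.Adj z p.2 := by
      intro p hp hpN
      simp only [hNear, Finset.mem_filter, hp, true_and, not_forall] at hpN
      obtain ⟨t, ht⟩ := hpN
      rw [not_or] at ht
      have hcc : 1 ≤ c p t ∨ c p t ≤ -2 := by omega
      have hux : (c p t : ℝ) < ev (x : ℕ → ℝ) t - ev (p.1 : ℕ → ℝ) t :=
        lt_of_nonint (hnonint p hp t)
      have hux2 : ev (x : ℕ → ℝ) t - ev (p.1 : ℕ → ℝ) t < (c p t : ℝ) + 1 := by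
        have := Int.lt_floor_add_one (ev (x : ℕ → ℝ) t - ev (p.1 : ℕ → ℝ) t)
        push_cast at this ⊢
        exact this
      have hG1 : 1 < |ev (x : ℕ → ℝ) t - ev (p.1 : ℕ → ℝ) t| := by
        rw [lt_abs]
        rcases hcc with hcase | hcase
        · left
          have : (1 : ℝ) ≤ (c p t : ℝ) := by exact_mod_cast hcase
          linarith
        · right
          have : ((c p t : ℝ)) + 1 ≤ -1 := by
            have : (c p t : ℝ) ≤ -2 := by exact_mod_cast hcase
            linarith
          linarith
      have hzv := hzb t p hp
      have hH1 : 1 < |ev (z : ℕ → ℝ) t - ev (p.2 : ℕ → ℝ) t| := by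
        rw [lt_abs]
        rcases hcc with hcase | hcase
        · left
          have : (1 : ℝ) ≤ (c p t : ℝ) := by exact_mod_cast hcase
          linarith [hzv.1, hγpos]
        · right
          have : (c p t : ℝ) ≤ -2 := by exact_mod_cast hcase
          linarith [hzv.2, hγpos]
      constructor
      · intro h
        have hlt := hGt _ _ h
        have hle := ev_le_supDist hxC (hsC p hp) t
        linarith
      · intro h
        have hlt := hHt _ _ h
        have hle := ev_le_supDist hzC (hyC p hp) t
        linarith
    have hkey : ∀ p ∈ P, (G.Adj x p.1 ↔ H.Adj z p.2) := by
      intro p hp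
      by_cases hpN : p ∈ Near
      · by_cases hadj : G.Adj x p.1
        · have hmem : p.2 ∈ Af := by
            simp only [hAf, Finset.mem_image, Finset.mem_filter]
            exact ⟨p, ⟨hpN, hadj⟩, rfl⟩
          exact iff_of_true hadj (hadjA _ hmem)
        · have hmem : p.2 ∈ Bf := by
            simp only [hBf, Finset.mem_image, Finset.mem_filter]
            exact ⟨p, ⟨hpN, hadj⟩, rfl⟩
          exact iff_of_false hadj (hnadjB _ hmem)
      · obtain ⟨h1, h2⟩ := hGfar p hp hpN
        exact iff_of_false h1 h2
    refine ⟨z, ?_, ?_, ?_⟩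
    · intro p hp q hq
      rcases Finset.mem_insert.mp hp with rfl | hpP <;>
        rcases Finset.mem_insert.mp hq with h | hqP
      · rw [h]
        simp
      · exact iff_of_false (fun h' => hx q hqP h'.symm) (fun h' => hzney q hqP h')
      · subst h
        exact iff_of_false (fun h' => hx p hpP h') (fun h' => hzney p hpP h'.symm)
      · exact hP.1 p hpP q hqP
    · intro p hp q hq t
      rcases Finset.mem_insert.mp hp with rfl | hpP <;>
        rcases Finset.mem_insert.mp hq with h | hqP
      · rw [h]
        simp
      · exact (hfloorz q hqP t).symm
      · rw [h]
        have e1 : ev (p.1 : ℕ → ℝ) t - ev (x : ℕ → ℝ) t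
            = -(ev (x : ℕ → ℝ) t - ev (p.1 : ℕ → ℝ) t) := by ring
        have e2 : ⌊ev (p.1 : ℕ → ℝ) t - ev (x : ℕ → ℝ) t⌋ = -(c p t) - 1 := by
          rw [e1]
          exact floor_neg_of_nonint rfl (hnonint p hpP t)
        have hb := hzb t p hpP
        have e3 : ⌊ev (p.2 : ℕ → ℝ) t - ev ((z : W) : ℕ → ℝ) t⌋ = -(c p t) - 1 := by
          apply floor_eq_of_bounds
          · push_cast
            linarith [hb.2, hγpos]
          · push_cast
            linarith [hb.1, hγpos]
        rw [e2, e3]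
      · exact hP.2.1 p hpP q hqP t
    · intro p hp q hq
      rcases Finset.mem_insert.mp hp with rfl | hpP <;>
        rcases Finset.mem_insert.mp hq with h | hqP
      · rw [h]
        simp
      · exact hkey q hqP
      · rw [h]
        exact ⟨fun h' => ((hkey p hpP).mp h'.symm).symm, fun h' => ((hkey p hpP).mpr h'.symm).symm⟩
      · exact hP.2.2 p hpP q hqP

lemma goodpairs_empty {V W : Set (ℕ → ℝ)} (G : SimpleGraph V) (H : SimpleGraph W) :
    GoodPairs G H (∅ : Finset (V × W)) := by
  refine ⟨?_, ?_, ?_⟩ <;> intro p hp <;> simp at hp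

lemma goodpairs_swap {V W : Set (ℕ → ℝ)} {G : SimpleGraph V} {H : SimpleGraph W}
    {P : Finset (V × W)} (h : GoodPairs G H P) :
    GoodPairs H G (P.image Prod.swap) := by
  refine ⟨?_, ?_, ?_⟩ <;> intro p hp q hq <;>
    simp only [Finset.mem_image] at hp hq <;>
    obtain ⟨p', hp', rfl⟩ := hp <;> obtain ⟨q', hq', rfl⟩ := hq
  · exact (h.1 p' hp' q' hq').symm
  · intro t
    exact (h.2.1 p' hp' q' hq' t).symm
  · exact (h.2.2 p' hp' q' hq').symm

lemma image_swap_swap {V W : Set (ℕ → ℝ)} (P : Finset (V × W)) :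
    (P.image Prod.swap).image Prod.swap = P := by
  rw [Finset.image_image]
  simp [Function.comp]

lemma forward_total {V W : Set (ℕ → ℝ)}
    (hVsub : ∀ x ∈ V, InC x) (hWsub : ∀ x ∈ W, InC x)
    (hWdense : ∀ x : ℕ → ℝ, InC x → ∀ ε : ℝ, 0 < ε → ∃ w ∈ W, supDist x w < ε)
    (hVidf : IDFSet V)
    (G : SimpleGraph V) (H : SimpleGraph W)
    (hGt : Threshold1 G) (hHt : Threshold1 H) (hHgec : GEC H)
    (P : Finset (V × W)) (hP : GoodPairs G H P) (x : V) :
    ∃ P', P ⊆ P' ∧ GoodPairs G H P' ∧ ∃ y, (x, y) ∈ P' := by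
  classical
  by_cases hdom : ∃ p ∈ P, p.1 = x
  · obtain ⟨p, hp, he⟩ := hdom
    refine ⟨P, subset_rfl, hP, p.2, ?_⟩
    rw [← he]
    simpa using hp
  · push_neg at hdom
    obtain ⟨z, hz⟩ := ext_lemma hVsub hWsub hWdense hVidf G H hGt hHt hHgec P hP x hdom
    exact ⟨insert (x, z) P, Finset.subset_insert _ _, hz, z, Finset.mem_insert_self _ _⟩

lemma backward_total {V W : Set (ℕ → ℝ)}
    (hVsub : ∀ x ∈ V, InC x) (hWsub : ∀ x ∈ W, InC x)
    (hVdense : ∀ x : ℕ → ℝ, InC x → ∀ ε : ℝ, 0 < ε → ∃ w ∈ V, supDist x w < ε)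
    (hWidf : IDFSet W)
    (G : SimpleGraph V) (H : SimpleGraph W)
    (hGt : Threshold1 G) (hHt : Threshold1 H) (hGgec : GEC G)
    (P : Finset (V × W)) (hP : GoodPairs G H P) (y : W) :
    ∃ P', P ⊆ P' ∧ GoodPairs G H P' ∧ ∃ v, (v, y) ∈ P' := by
  classical
  obtain ⟨P'', hsub, hgood, v, hv⟩ :=
    forward_total hWsub hVsub hVdense hWidf H G hHt hGt hGgec
      (P.image Prod.swap) (goodpairs_swap hP) y
  refine ⟨P''.image Prod.swap, ?_, goodpairs_swap hgood, v, ?_⟩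
  · intro p hp
    have : p.swap ∈ P.image Prod.swap := Finset.mem_image_of_mem _ hp
    have h2 := Finset.mem_image_of_mem Prod.swap (hsub this)
    simpa using h2
  · have := Finset.mem_image_of_mem Prod.swap hv
    simpa using this

/-- any two g.e.c. geometric 1-graphs on dense countable i.d.f. subsets of
`c` are isomorphic. -/
theorem iso_of_gec_geometric_one_graphs_c
    (V W : Set (ℕ → ℝ)) (hVc : V.Countable) (hWc : W.Countable)
    (hVsub : ∀ x ∈ V, InC x) (hWsub : ∀ x ∈ W, InC x)
    (hVdense : ∀ x : ℕ → ℝ, InC x → ∀ ε : ℝ, 0 < ε → ∃ v ∈ V, supDist x v < ε)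
    (hWdense : ∀ x : ℕ → ℝ, InC x → ∀ ε : ℝ, 0 < ε → ∃ w ∈ W, supDist x w < ε)
    (hVidf : IDFSet V) (hWidf : IDFSet W)
    (G : SimpleGraph V) (H : SimpleGraph W)
    (hGt : Threshold1 G) (hHt : Threshold1 H)
    (hGgec : GEC G) (hHgec : GEC H) :
    Nonempty (G ≃g H) := by
  classical
  have hInC0 : InC (fun _ => (0 : ℝ)) := ⟨0, tendsto_const_nhds⟩
  have hVne : Nonempty V := by
    obtain ⟨v, hv, -⟩ := hVdense _ hInC0 1 one_pos
    exact ⟨⟨v, hv⟩⟩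
  have hWne : Nonempty W := by
    obtain ⟨w, hw, -⟩ := hWdense _ hInC0 1 one_pos
    exact ⟨⟨w, hw⟩⟩
  haveI : Countable V := hVc.to_subtype
  haveI : Countable W := hWc.to_subtype
  obtain ⟨eV, heV⟩ := exists_surjective_nat V
  obtain ⟨eW, heW⟩ := exists_surjective_nat W
  -- one step of the back-and-forth
  have step : ∀ (n : ℕ) (P : Finset (V × W)), GoodPairs G H P →
      ∃ P', P ⊆ P' ∧ GoodPairs G H P' ∧
        (n % 2 = 0 → ∃ yy, (eV (n / 2), yy) ∈ P') ∧
        (n % 2 ≠ 0 → ∃ vv, (vv, eW (n / 2)) ∈ P') := by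
    intro n P hP
    by_cases h : n % 2 = 0
    · obtain ⟨P', h1, h2, y, h3⟩ :=
        forward_total hVsub hWsub hWdense hVidf G H hGt hHt hHgec P hP (eV (n / 2))
      exact ⟨P', h1, h2, fun _ => ⟨y, h3⟩, fun hc => absurd h hc⟩
    · obtain ⟨P', h1, h2, v, h3⟩ :=
        backward_total hVsub hWsub hVdense hWidf G H hGt hHt hGgec P hP (eW (n / 2))
      exact ⟨P', h1, h2, fun hc => absurd hc h, fun _ => ⟨v, h3⟩⟩
  choose f hf1 hf2 hf3 hf4 using step
  let Q : ℕ → Σ' P : Finset (V × W), GoodPairs G H P := fun n =>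
    Nat.rec ⟨∅, goodpairs_empty G H⟩ (fun n ih => ⟨f n ih.1 ih.2, hf2 n ih.1 ih.2⟩) n
  have hQsucc : ∀ n : ℕ, (Q (n + 1)).1 = f n (Q n).1 (Q n).2 := fun n => rfl
  have hmono : ∀ n : ℕ, (Q n).1 ⊆ (Q (n + 1)).1 := by
    intro n
    rw [hQsucc n]
    exact hf1 n (Q n).1 (Q n).2
  have hmono' : ∀ m n : ℕ, m ≤ n → (Q m).1 ⊆ (Q n).1 := by
    intro m n hmn
    induction n, hmn using Nat.le_induction with
    | base => exact subset_rfl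
    | succ n hmn ih => exact ih.trans (hmono n)
  -- the limit relation
  set R : V → W → Prop := fun v w => ∃ n, (v, w) ∈ (Q n).1 with hR
  have hcommon : ∀ {v w v' w'}, R v w → R v' w' →
      ∃ n, (v, w) ∈ (Q n).1 ∧ (v', w') ∈ (Q n).1 := by
    intro v w v' w' ⟨n, hn⟩ ⟨m, hm⟩
    exact ⟨max n m, hmono' n _ (le_max_left n m) hn, hmono' m _ (le_max_right n m) hm⟩
  have hfunc : ∀ {v w w'}, R v w → R v w' → w = w' := by
    intro v w w' h1 h2
    obtain ⟨n, hn1, hn2⟩ := hcommon h1 h2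
    exact ((Q n).2.1 _ hn1 _ hn2).mp rfl
  have hinj : ∀ {v v' w}, R v w → R v' w → v = v' := by
    intro v v' w h1 h2
    obtain ⟨n, hn1, hn2⟩ := hcommon h1 h2
    exact ((Q n).2.1 _ hn1 _ hn2).mpr rfl
  have hadj : ∀ {v w v' w'}, R v w → R v' w' → (G.Adj v v' ↔ H.Adj w w') := by
    intro v w v' w' h1 h2
    obtain ⟨n, hn1, hn2⟩ := hcommon h1 h2
    exact (Q n).2.2.2 _ hn1 _ hn2
  have htotal : ∀ v : V, ∃ w, R v w := by
    intro v
    obtain ⟨k, rfl⟩ := heV v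
    have h2 : (2 * k) % 2 = 0 := by omega
    obtain ⟨yy, hyy⟩ := hf3 (2 * k) (Q (2 * k)).1 (Q (2 * k)).2 h2
    have hdiv : (2 * k) / 2 = k := by omega
    rw [hdiv] at hyy
    exact ⟨yy, 2 * k + 1, by rw [hQsucc]; exact hyy⟩
  have hsurj : ∀ w : W, ∃ v, R v w := by
    intro w
    obtain ⟨k, rfl⟩ := heW w
    have h2 : (2 * k + 1) % 2 ≠ 0 := by omega
    obtain ⟨vv, hvv⟩ := hf4 (2 * k + 1) (Q (2 * k + 1)).1 (Q (2 * k + 1)).2 h2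
    have hdiv : (2 * k + 1) / 2 = k := by omega
    rw [hdiv] at hvv
    exact ⟨vv, 2 * k + 2, by rw [hQsucc]; exact hvv⟩
  -- build the isomorphism
  have htoR : ∀ v : V, R v (Classical.choose (htotal v)) :=
    fun v => Classical.choose_spec (htotal v)
  have hinvR : ∀ w : W, R (Classical.choose (hsurj w)) w :=
    fun w => Classical.choose_spec (hsurj w)
  refine ⟨⟨⟨fun v => Classical.choose (htotal v), fun w => Classical.choose (hsurj w),
    ?_, ?_⟩, ?_⟩⟩
  · intro v
    exact hinj (hinvR (Classical.choose (htotal v))) (htoR v)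
  · intro w
    exact hfunc (htoR (Classical.choose (hsurj w))) (hinvR w)
  · intro a b
    exact (hadj (htoR a) (htoR b)).symm
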